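/- Let (X,d,μ) be a metric measure space, let n > 0 be a real number, let x ∈ X and let c > 0. Then Θ_x(s) = c for every s > 0 if and only if μ(B_r(x)) = c·ω_n·r^n for every r > 0. -/

import Mathlib

open MeasureTheory Metric Filter Set
open scoped ENNReal

/-- The measure is finite and nonzero on every ball of positive radius. -/
def BallMeasureNontrivial {X : Type*} [MetricSpace X] [MeasurableSpace X]
    (μ : Measure X) : Prop :=
  ∀ (x : X) (r : ℝ), 0 < r → 0 < μ (ball x r) ∧ μ (ball x r) < ⊤

/-- The `Θ`-volume `Θ_x(s) = (4πs)^{-n/2} ∫_X exp(−d(x,y)²/(4s)) dμ(y)`,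
as an extended nonnegative real (possibly `+∞`). -/
noncomputable def Theta {X : Type*} [MetricSpace X] [MeasurableSpace X] (μ : Measure X)
    (n : ℝ) (x : X) (s : ℝ) : ℝ≥0∞ :=
  ENNReal.ofReal ((4 * Real.pi * s) ^ (-(n / 2))) *
    ∫⁻ y, ENNReal.ofReal (Real.exp (-(dist x y) ^ 2 / (4 * s))) ∂μ

/-- `ω_n = π^{n/2}/Γ(n/2+1)`. -/
noncomputable def omegaVol (s : ℝ) : ℝ := Real.pi ^ (s / 2) / Real.Gamma (s / 2 + 1)

/-!
Both sides only see the distribution `ν = μ.map (dist x)` of the distance to `x`: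
`μ(B_r(x)) = ν(-∞, r)`, and `Θ_x(s)` is `(4πs)^{-n/2} ∫ exp(-t²/(4s)) dν(t)`. The volume condition
says exactly that `ν` is the radial part `c n ω_n t^{n-1} dt` of `c` times Lebesgue measure on
`ℝⁿ`, whose `Θ`-volume is `c`. Conversely, a measure on `[0, ∞)` is determined by its Gaussian
integrals at `s = 1/(4(k+1))`: after tilting by `exp(-t²)` these are the moments of the bounded
injective function `exp(-t²)` on `ℝ≥0`, and by Stone–Weierstrass such moments determine a finite
measure.
-/

open scoped NNReal BoundedContinuousFunction

lemma omegaVol_pos {n : ℝ} (hn : 0 < n) : 0 < omegaVol n :=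
  div_pos (Real.rpow_pos_of_pos Real.pi_pos _) (Real.Gamma_pos_of_pos (by linarith))

section DistanceDistribution

variable {X : Type*} [MetricSpace X] [MeasurableSpace X] [BorelSpace X]

lemma measurable_dist_left (x : X) : Measurable (dist x) :=
  (continuous_const.dist continuous_id).measurable

lemma ae_nonneg_map_dist (μ : Measure X) (x : X) : ∀ᵐ y ∂μ.map (dist x), 0 ≤ y :=
  (ae_map_iff (measurable_dist_left x).aemeasurable
    measurableSet_Ici).2 (.of_forall fun _ => dist_nonneg)

lemma map_dist_Iio (μ : Measure X) (x : X) (r : ℝ) : μ.map (dist x) (Iio r) = μ (ball x r) := by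
  rw [Measure.map_apply (measurable_dist_left x) measurableSet_Iio]
  congr 1
  ext y
  simp [dist_comm]

lemma Theta_map_dist (μ : Measure X) (n : ℝ) (x : X) (s : ℝ) :
    Theta μ n x s = Theta (μ.map (dist x)) n 0 s := by
  rw [Theta, Theta, lintegral_map (by fun_prop) (measurable_dist_left x)]
  simp [Real.dist_eq]

end DistanceDistribution

lemma Theta_real_zero (ν : Measure ℝ) (n s : ℝ) :
    Theta ν n 0 s = ENNReal.ofReal ((4 * Real.pi * s) ^ (-(n / 2))) *
      ∫⁻ y, ENNReal.ofReal (Real.exp (-y ^ 2 / (4 * s))) ∂ν := by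
  simp [Theta, Real.dist_eq]

section EuclideanRadialMeasure

variable {n c : ℝ}

/-- The distribution of `|y|` under `c` times Lebesgue measure on `ℝⁿ`, for real `n`. -/
noncomputable def euclideanRadialMeasure (n c : ℝ) : Measure ℝ :=
  (volume.restrict (Ioi 0)).withDensity fun y => ENNReal.ofReal (c * omegaVol n * n * y ^ (n - 1))

lemma ae_nonneg_euclideanRadialMeasure : ∀ᵐ y ∂euclideanRadialMeasure n c, 0 ≤ y :=
  (withDensity_absolutelyContinuous _ _).ae_le
    ((ae_restrict_mem measurableSet_Ioi).mono fun _ hy => le_of_lt hy)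

lemma euclideanRadialMeasure_Iio (hn : 0 < n) (hc : 0 ≤ c) {r : ℝ} (hr : 0 < r) :
    euclideanRadialMeasure n c (Iio r) = ENNReal.ofReal (c * omegaVol n * r ^ n) := by
  have hω := omegaVol_pos hn
  rw [euclideanRadialMeasure, withDensity_apply _ measurableSet_Iio,
    Measure.restrict_restrict measurableSet_Iio, Iio_inter_Ioi,
    ← ofReal_integral_eq_lintegral_ofReal]
  · rw [← integral_Ioc_eq_integral_Ioo, ← intervalIntegral.integral_of_le hr.le,
      intervalIntegral.integral_const_mul, integral_rpow (Or.inl (by linarith)), sub_add_cancel,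
      Real.zero_rpow hn.ne', sub_zero]
    field_simp
  · exact ((intervalIntegral.intervalIntegrable_rpow' (by linarith)).1.mono_set
      Ioo_subset_Ioc_self).const_mul _
  · filter_upwards [ae_restrict_mem measurableSet_Ioo] with y hy
    have := Real.rpow_nonneg hy.1.le (n - 1)
    positivity

/-- Polar coordinates for the Gaussian `exp (-|y|² / (4s))` on `ℝⁿ`, whose integral is
`(4πs)^{n/2}`. -/
lemma integral_Ioi_rpow_mul_exp_neg_sq_div (hn : 0 < n) {s : ℝ} (hs : 0 < s) :
    ∫ y in Ioi 0, n * omegaVol n * (y ^ (n - 1) * Real.exp (-y ^ 2 / (4 * s))) =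
      (4 * Real.pi * s) ^ (n / 2) := by
  have hexp : ∀ y : ℝ, Real.exp (-y ^ 2 / (4 * s)) = Real.exp (-(4 * s)⁻¹ * y ^ (2 : ℝ)) :=
    fun y => by rw [Real.rpow_two]; ring_nf
  have hpow : ((4 * s)⁻¹) ^ (-(n - 1 + 1) / 2) = (4 * s) ^ (n / 2) := by
    rw [Real.inv_rpow (by positivity), ← Real.rpow_neg (by positivity)]
    ring_nf
  have hΓ : Real.Gamma (n / 2 + 1) = n / 2 * Real.Gamma (n / 2) :=
    Real.Gamma_add_one (by positivity)
  have hΓpos : 0 < Real.Gamma (n / 2) := Real.Gamma_pos_of_pos (by positivity)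
  simp only [hexp]
  rw [integral_const_mul, integral_rpow_mul_exp_neg_mul_rpow two_pos (by linarith)
    (by positivity), hpow, sub_add_cancel, omegaVol, hΓ, mul_right_comm 4 Real.pi s,
    Real.mul_rpow (by positivity) Real.pi_pos.le]
  field_simp

lemma lintegral_exp_neg_sq_div_euclideanRadialMeasure (hn : 0 < n) (hc : 0 ≤ c) {s : ℝ}
    (hs : 0 < s) :
    ∫⁻ y, ENNReal.ofReal (Real.exp (-y ^ 2 / (4 * s))) ∂euclideanRadialMeasure n c =
      ENNReal.ofReal (c * (4 * Real.pi * s) ^ (n / 2)) := by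
  have hω := omegaVol_pos hn
  have hint : IntegrableOn (fun y => c * (n * omegaVol n *
      (y ^ (n - 1) * Real.exp (-y ^ 2 / (4 * s))))) (Ioi 0) :=
    (((integrableOn_rpow_mul_exp_neg_mul_sq (b := (4 * s)⁻¹) (by positivity)
      (by linarith : -1 < n - 1)).congr_fun (fun y _ => by ring_nf) measurableSet_Ioi).const_mul
      _).const_mul _
  have hnonneg : 0 ≤ᵐ[volume.restrict (Ioi 0)] fun y => c * (n * omegaVol n *
      (y ^ (n - 1) * Real.exp (-y ^ 2 / (4 * s)))) := by
    filter_upwards [ae_restrict_mem measurableSet_Ioi] with y hy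
    have := Real.rpow_nonneg (le_of_lt hy) (n - 1)
    positivity
  rw [euclideanRadialMeasure, lintegral_withDensity_eq_lintegral_mul _ (by fun_prop)
    (by fun_prop), ← integral_Ioi_rpow_mul_exp_neg_sq_div hn hs, ← integral_const_mul,
    ofReal_integral_eq_lintegral_ofReal hint hnonneg]
  refine setLIntegral_congr_fun measurableSet_Ioi fun y hy => ?_
  have := Real.rpow_nonneg (le_of_lt hy) (n - 1)
  rw [Pi.mul_apply, ← ENNReal.ofReal_mul (by positivity)]
  ring_nf

lemma Theta_euclideanRadialMeasure (hn : 0 < n) (hc : 0 ≤ c) {s : ℝ} (hs : 0 < s) :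
    Theta (euclideanRadialMeasure n c) n 0 s = ENNReal.ofReal c := by
  have hpos : 0 < (4 * Real.pi * s) ^ (n / 2) := by positivity
  rw [Theta_real_zero, lintegral_exp_neg_sq_div_euclideanRadialMeasure hn hc hs,
    ← ENNReal.ofReal_mul (by positivity), Real.rpow_neg (by positivity), mul_left_comm,
    inv_mul_cancel₀ hpos.ne', mul_one]

end EuclideanRadialMeasure

theorem MeasureTheory.Measure.ext_of_integral_pow_eq {E : Type*} [MeasurableSpace E]
    [PseudoEMetricSpace E] [BorelSpace E] [CompleteSpace E] [SecondCountableTopology E]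
    {P P' : Measure E} [IsFiniteMeasure P] [IsFiniteMeasure P'] {g : E →ᵇ ℝ}
    (hg : Function.Injective g) (h : ∀ k : ℕ, ∫ x, g x ^ k ∂P = ∫ x, g x ^ k ∂P') :
    P = P' := by
  let A : StarSubalgebra ℝ (E →ᵇ ℝ) :=
    { (Polynomial.aeval g).range with
      star_mem' := fun {f} hf => by
        convert hf
        ext x
        exact star_trivial (f x) }
  refine ext_of_forall_mem_subalgebra_integral_eq_of_pseudoEMetric_complete_countable (A := A)
    (fun x y hxy => ⟨g, ⟨_, ⟨g, ⟨Polynomial.X, Polynomial.aeval_X g⟩, rfl⟩, rfl⟩, hg.ne hxy⟩) ?_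
  rintro _ ⟨p, rfl⟩
  change ∫ x, Polynomial.aeval g p x ∂P = ∫ x, Polynomial.aeval g p x ∂P'
  have hpow (Q : Measure E) [IsFiniteMeasure Q] (i : ℕ) : Integrable (fun x => g x ^ i) Q :=
    (g ^ i).integrable Q
  simp only [Polynomial.aeval_eq_sum_range, BoundedContinuousFunction.coe_sum,
    BoundedContinuousFunction.coe_smul, BoundedContinuousFunction.coe_pow, Finset.sum_apply,
    Pi.pow_apply, smul_eq_mul]
  rw [integral_finsetSum _ fun i _ => (hpow P i).const_mul _,
    integral_finsetSum _ fun i _ => (hpow P' i).const_mul _]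
  simp only [integral_const_mul, h]

noncomputable def expNegSq : ℝ≥0 →ᵇ ℝ :=
  .ofNormedAddCommGroup (fun t => Real.exp (-(t : ℝ) ^ 2)) (by fun_prop) 1
    fun t => by simp [Real.norm_eq_abs, abs_of_pos (Real.exp_pos _)]

lemma expNegSq_apply (t : ℝ≥0) : expNegSq t = Real.exp (-(t : ℝ) ^ 2) := rfl

lemma expNegSq_injective : Function.Injective expNegSq := fun s t hst => by
  have : (s : ℝ) ^ 2 = (t : ℝ) ^ 2 := by simpa [expNegSq_apply] using hst
  exact NNReal.coe_injective ((pow_left_inj₀ s.2 t.2 two_ne_zero).1 this)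

/-- The finite measure `exp (-y²) dσ(y)`, moved to `ℝ≥0` where `expNegSq` separates points. -/
noncomputable def gaussianTilt (σ : Measure ℝ) : Measure ℝ≥0 :=
  (σ.withDensity fun y => ENNReal.ofReal (Real.exp (-y ^ 2))).map Real.toNNReal

section GaussianTilt

variable {σ : Measure ℝ}

lemma lintegral_expNegSq_pow_gaussianTilt (hσ : ∀ᵐ y ∂σ, 0 ≤ y) (k : ℕ) :
    ∫⁻ t, ENNReal.ofReal (expNegSq t ^ k) ∂gaussianTilt σ =
      ∫⁻ y, ENNReal.ofReal (Real.exp (-(k + 1) * y ^ 2)) ∂σ := by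
  rw [gaussianTilt, lintegral_map (by fun_prop) measurable_real_toNNReal,
    lintegral_withDensity_eq_lintegral_mul _ (by fun_prop) (by fun_prop)]
  refine lintegral_congr_ae (hσ.mono fun y hy => ?_)
  rw [Pi.mul_apply, expNegSq_apply, Real.coe_toNNReal y hy,
    ← ENNReal.ofReal_mul (Real.exp_pos _).le, ← Real.exp_nat_mul, ← Real.exp_add]
  ring_nf

lemma isFiniteMeasure_gaussianTilt (hσ : ∀ᵐ y ∂σ, 0 ≤ y)
    (hfin : ∫⁻ y, ENNReal.ofReal (Real.exp (-y ^ 2)) ∂σ ≠ ∞) : IsFiniteMeasure (gaussianTilt σ) := by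
  have h0 := lintegral_expNegSq_pow_gaussianTilt hσ 0
  simp only [pow_zero, ENNReal.ofReal_one, lintegral_one, Nat.cast_zero, zero_add, neg_mul,
    one_mul] at h0
  exact ⟨h0 ▸ hfin.lt_top⟩

lemma map_coe_gaussianTilt (hσ : ∀ᵐ y ∂σ, 0 ≤ y) :
    (gaussianTilt σ).map ((↑) : ℝ≥0 → ℝ) =
      σ.withDensity fun y => ENNReal.ofReal (Real.exp (-y ^ 2)) := by
  rw [gaussianTilt, Measure.map_map measurable_coe_nnreal_real measurable_real_toNNReal]
  conv_rhs => rw [← Measure.map_id (μ := σ.withDensity _)]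
  exact Measure.map_congr ((withDensity_absolutelyContinuous _ _).ae_le
    (hσ.mono fun y hy => Real.coe_toNNReal y hy))

end GaussianTilt

theorem MeasureTheory.Measure.ext_of_lintegral_exp_neg_mul_sq {ν ν' : Measure ℝ}
    (hν : ∀ᵐ y ∂ν, 0 ≤ y) (hν' : ∀ᵐ y ∂ν', 0 ≤ y)
    (hfin : ∫⁻ y, ENNReal.ofReal (Real.exp (-y ^ 2)) ∂ν ≠ ∞)
    (h : ∀ k : ℕ, ∫⁻ y, ENNReal.ofReal (Real.exp (-(k + 1) * y ^ 2)) ∂ν =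
      ∫⁻ y, ENNReal.ofReal (Real.exp (-(k + 1) * y ^ 2)) ∂ν') :
    ν = ν' := by
  have hfin' : ∫⁻ y, ENNReal.ofReal (Real.exp (-y ^ 2)) ∂ν' ≠ ∞ := by
    simpa using (h 0).symm.trans_ne (by simpa using hfin)
  have := isFiniteMeasure_gaussianTilt hν hfin
  have := isFiniteMeasure_gaussianTilt hν' hfin'
  have hpow_nonneg (Q : Measure ℝ≥0) (k : ℕ) : 0 ≤ᵐ[Q] fun t => expNegSq t ^ k :=
    .of_forall fun t => pow_nonneg (Real.exp_pos _).le k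
  have htilt : gaussianTilt ν = gaussianTilt ν' :=
    Measure.ext_of_integral_pow_eq expNegSq_injective fun k => by
      rw [integral_eq_lintegral_of_nonneg_ae (hpow_nonneg _ k) (by fun_prop),
        integral_eq_lintegral_of_nonneg_ae (hpow_nonneg _ k) (by fun_prop),
        lintegral_expNegSq_pow_gaussianTilt hν, lintegral_expNegSq_pow_gaussianTilt hν', h]
  have hw_ne_zero (σ : Measure ℝ) : ∀ᵐ y ∂σ, ENNReal.ofReal (Real.exp (-y ^ 2)) ≠ 0 :=
    .of_forall fun y => by simp [Real.exp_pos]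
  have hw_ne_top (σ : Measure ℝ) : ∀ᵐ y ∂σ, ENNReal.ofReal (Real.exp (-y ^ 2)) ≠ ∞ :=
    .of_forall fun _ => ENNReal.ofReal_ne_top
  rw [← withDensity_inv_same (by fun_prop) (hw_ne_zero ν) (hw_ne_top ν),
    ← withDensity_inv_same (by fun_prop) (hw_ne_zero ν') (hw_ne_top ν'),
    ← map_coe_gaussianTilt hν, ← map_coe_gaussianTilt hν', htilt]

theorem MeasureTheory.Measure.ext_of_Iio_of_ae_nonneg {ν ν' : Measure ℝ}
    (hν : ∀ᵐ y ∂ν, 0 ≤ y) (hν' : ∀ᵐ y ∂ν', 0 ≤ y) (hfin : ∀ r, 0 < r → ν (Iio r) ≠ ∞)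
    (h : ∀ r, 0 < r → ν (Iio r) = ν' (Iio r)) : ν = ν' := by
  have hneg {σ : Measure ℝ} (hσ : ∀ᵐ y ∂σ, 0 ≤ y) {r : ℝ} (hr : r ≤ 0) : σ (Iio r) = 0 :=
    measure_mono_null (fun y hy => not_le.2 (lt_of_lt_of_le hy hr)) (ae_iff.1 hσ)
  refine Measure.ext_of_generateFrom_of_iUnion (range Iio) (fun k : ℕ => Iio (k + 1 : ℝ))
    (by rw [BorelSpace.measurable_eq (α := ℝ), borel_eq_generateFrom_Iio]) isPiSystem_Iio
    (iUnion_eq_univ_iff.2 fun y => (exists_nat_gt y).imp fun k hk => by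
      simp only [mem_Iio]; linarith) (fun k => ⟨_, rfl⟩)
    (fun k => hfin _ (by positivity)) ?_
  rintro _ ⟨r, rfl⟩
  rcases le_or_gt r 0 with hr | hr
  · rw [hneg hν hr, hneg hν' hr]
  · exact h r hr

theorem eq_of_Theta_eq {ν ν' : Measure ℝ} {n : ℝ}
    (hν : ∀ᵐ y ∂ν, 0 ≤ y) (hν' : ∀ᵐ y ∂ν', 0 ≤ y)
    (h : ∀ s, 0 < s → Theta ν n 0 s = Theta ν' n 0 s) (hfin : Theta ν n 0 (1 / 4) ≠ ∞) :
    ν = ν' := by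
  have hfactor {s : ℝ} (hs : 0 < s) : ENNReal.ofReal ((4 * Real.pi * s) ^ (-(n / 2))) ≠ 0 := by
    simp only [ne_eq, ENNReal.ofReal_eq_zero, not_le]
    positivity
  have hexp {a : ℝ} (ha : 0 < a) (y : ℝ) : -y ^ 2 / (4 * (1 / (4 * a))) = -a * y ^ 2 := by
    field_simp
  refine Measure.ext_of_lintegral_exp_neg_mul_sq hν hν' ?_ fun k => ?_
  · rw [Theta_real_zero] at hfin
    simpa [hexp one_pos] using
      (ENNReal.lt_top_of_mul_ne_top_right hfin (hfactor (by norm_num))).ne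
  · have hs : (0 : ℝ) < 1 / (4 * (k + 1)) := by positivity
    have := h _ hs
    rw [Theta_real_zero, Theta_real_zero,
      ENNReal.mul_right_inj (hfactor hs) ENNReal.ofReal_ne_top] at this
    simpa only [hexp (Nat.cast_add_one_pos k)] using this

theorem theta_volume_const_iff_general {X : Type*} [MetricSpace X] [MeasurableSpace X] [BorelSpace X]
    (μ : Measure X)
    (n : ℝ) (hn : 0 < n) (x : X) (c : ℝ) (hc : 0 < c) :
    (∀ s : ℝ, 0 < s → Theta μ n x s = ENNReal.ofReal c) ↔
      (∀ r : ℝ, 0 < r → μ (ball x r) = ENNReal.ofReal (c * omegaVol n * r ^ n)) := by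
  constructor
  · intro hΘ r hr
    have hν : μ.map (dist x) = euclideanRadialMeasure n c :=
      eq_of_Theta_eq (ae_nonneg_map_dist μ x) ae_nonneg_euclideanRadialMeasure
        (fun s hs => by
          rw [← Theta_map_dist, hΘ s hs, Theta_euclideanRadialMeasure hn hc.le hs])
        (by rw [← Theta_map_dist, hΘ _ (by norm_num)]; exact ENNReal.ofReal_ne_top)
    rw [← map_dist_Iio, hν, euclideanRadialMeasure_Iio hn hc.le hr]
  · intro hball s hs
    have hν : μ.map (dist x) = euclideanRadialMeasure n c :=
      Measure.ext_of_Iio_of_ae_nonneg (ae_nonneg_map_dist μ x) ae_nonneg_euclideanRadialMeasure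
        (fun r hr => by rw [map_dist_Iio, hball r hr]; exact ENNReal.ofReal_ne_top)
        (fun r hr => by rw [map_dist_Iio, hball r hr, euclideanRadialMeasure_Iio hn hc.le hr])
    rw [Theta_map_dist, hν, Theta_euclideanRadialMeasure hn hc.le hs]

/-- `Θ_x(s) = c` for every `s > 0` if and only if `μ(B_r(x)) = c·ω_n·r^n`
for every `r > 0`. -/
theorem theta_volume_const_iff {X : Type*} [MetricSpace X] [MeasurableSpace X] [BorelSpace X]
    (μ : Measure X) (hball : BallMeasureNontrivial μ)
    (n : ℝ) (hn : 0 < n) (x : X) (c : ℝ) (hc : 0 < c) :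
    (∀ s : ℝ, 0 < s → Theta μ n x s = ENNReal.ofReal c) ↔
      (∀ r : ℝ, 0 < r → μ (ball x r) = ENNReal.ofReal (c * omegaVol n * r ^ n)) :=
  theta_volume_const_iff_general μ n hn x c hc
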